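/- Let a, t be real numbers and set t̃ := a + 1 − t. Let x₀ : ℝ → ℝ be differentiable at t̃ with x₀(t̃) ≠ 0 and x₀'(t̃) ≠ 0, and define x₁(s) := 1 / x₀(a + 1 − s) for s near t. Then x₁ is differentiable at t with x₁'(t) = x₀'(t̃) / x₀(t̃)², and, setting X^N(s) := s − x₀(s)(1 − x₀(s))/x₀'(s), Y^N(s) := −(1 − x₀(s))²/x₀'(s), X_{SW}(t) := a + 1 − t + x₁(t)(1 − x₁(t))/x₁'(t), Y_{SW}(t) := −(1 − x₁(t))²/x₁'(t), the shear relations hold: X_{SW}(t) = X^N(t̃) + Y^N(t̃) and Y_{SW}(t) = Y^N(t̃). (That is, the south-west branch of the touching-path arctic curve is the image of the analytic continuation of the non-intersecting-path arctic curve under the shear transformation (x, y) ↦ (x + y, y).) -/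

import Mathlib

/-!
Reflecting and inverting, `x₁(s) = 1 / x₀(a + 1 - s)`, the chain rule gives
`x₁'(t) = x₀'(t̃) / x₀(t̃)²`. Substituting `x₁ = 1/u`, `x₁' = d/u²` with `u = x₀(t̃)`,
`d = x₀'(t̃)` into the south-west parametrization turns it into rational expressions in `u` and
`d`; the two shear relations are then the identities
`(u - 1)/d = -u(1 - u)/d - (1 - u)²/d` and `-(u - 1)²/d = -(1 - u)²/d`.
-/

theorem hasDerivAt_one_div_comp_const_sub {f : ℝ → ℝ} {c t : ℝ}
    (hf : DifferentiableAt ℝ f (c - t)) (hf0 : f (c - t) ≠ 0) :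
    HasDerivAt (fun s => 1 / f (c - s)) (deriv f (c - t) / f (c - t) ^ 2) t := by
  have hreflect : HasDerivAt (fun s => f (c - s)) (-deriv f (c - t)) t := by
    simpa using hf.hasDerivAt.comp_const_sub c t
  simpa only [one_div, neg_neg, neg_div] using hreflect.fun_inv hf0

section ShearIdentities

variable {K : Type*} [Field K] {u : K}

theorem shear_fst_of_inv (hu : u ≠ 0) (s d : K) :
    s + 1 / u * (1 - 1 / u) / (d / u ^ 2) = (s - u * (1 - u) / d) + -(1 - u) ^ 2 / d := by
  rcases eq_or_ne d 0 with rfl | hd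
  · simp
  · field_simp
    ring

theorem shear_snd_of_inv (hu : u ≠ 0) (d : K) :
    -(1 - 1 / u) ^ 2 / (d / u ^ 2) = -(1 - u) ^ 2 / d := by
  rcases eq_or_ne d 0 with rfl | hd
  · simp
  · field_simp
    ring

end ShearIdentities

theorem shear_phenomenon (a t : ℝ) (x₀ : ℝ → ℝ)
    (hdiff : DifferentiableAt ℝ x₀ (a + 1 - t)) (h0 : x₀ (a + 1 - t) ≠ 0) :
    DifferentiableAt ℝ (fun s => 1 / x₀ (a + 1 - s)) t ∧
    deriv (fun s => 1 / x₀ (a + 1 - s)) t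
        = deriv x₀ (a + 1 - t) / (x₀ (a + 1 - t)) ^ 2 ∧
    a + 1 - t + (1 / x₀ (a + 1 - t)) * (1 - 1 / x₀ (a + 1 - t)) /
          deriv (fun s => 1 / x₀ (a + 1 - s)) t
      = ((a + 1 - t) - x₀ (a + 1 - t) * (1 - x₀ (a + 1 - t)) / deriv x₀ (a + 1 - t))
        + (-(1 - x₀ (a + 1 - t)) ^ 2 / deriv x₀ (a + 1 - t)) ∧
    -(1 - 1 / x₀ (a + 1 - t)) ^ 2 / deriv (fun s => 1 / x₀ (a + 1 - s)) t
      = -(1 - x₀ (a + 1 - t)) ^ 2 / deriv x₀ (a + 1 - t) := by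
  have hx₁ := hasDerivAt_one_div_comp_const_sub hdiff h0
  rw [hx₁.deriv]
  exact ⟨hx₁.differentiableAt, rfl, shear_fst_of_inv h0 _ _, shear_snd_of_inv h0 _⟩
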